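/- For 0 ≤ c₁ < c₂ < ... < cₙ and a diagonal matrix A ∈ SO(n) with entries εᵢ = ±1, the Hessian of f_C(X) = Σₖ cₖ·Xₖₖ at A, in the coordinates given by the rotations B_{ij}(θ), is a diagonal matrix with entries −cᵢεᵢ − cⱼεⱼ (for i < j), all of which are nonzero; hence A is a non-degenerate critical point of f_C. -/

import Mathlib

/-!
At a diagonal `A`, `f_C (A * B_p θ * B_q φ)` is a finite sum of products of an entry of `B_p θ`
and an entry of `B_q φ`, so its mixed second derivative at `0` is the same sum with each rotation
replaced by its generator `E_{ji} - E_{ij}`. This weighted trace of a product of two generators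
vanishes unless `p = q`, and equals `-cᵢεᵢ - cⱼεⱼ` for `p = q = (i, j)`, which is nonzero for every
choice of signs because `0 ≤ cᵢ < cⱼ`.
-/

attribute [local instance] Matrix.normedAddCommGroup Matrix.normedSpace

/-- The index set of pairs `i < j` in `Fin n`. -/
def Pairs (n : ℕ) := {p : Fin n × Fin n // p.1 < p.2}

instance (n : ℕ) : Fintype (Pairs n) := Subtype.fintype _
instance (n : ℕ) : DecidableEq (Pairs n) := Subtype.instDecidableEq

/-- The rotation matrix `B i j θ`: the identity except with `cos θ` at `(i,i)` and `(j,j)`,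
`-sin θ` at `(i,j)` and `sin θ` at `(j,i)`. -/
noncomputable def rotB (n : ℕ) (i j : Fin n) (θ : ℝ) : Matrix (Fin n) (Fin n) ℝ :=
  Matrix.of fun k l =>
    if k = i ∧ l = i then Real.cos θ
    else if k = j ∧ l = j then Real.cos θ
    else if k = i ∧ l = j then -Real.sin θ
    else if k = j ∧ l = i then Real.sin θ
    else if k = l then 1 else 0

/-- The Hessian of `f_C` at `A` in the local coordinates given by the rotations `B_{ij}`,
indexed by pairs `i < j`. -/
noncomputable def hessB (n : ℕ) (c : Fin n → ℝ) (A : Matrix (Fin n) (Fin n) ℝ) :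
    Matrix (Pairs n) (Pairs n) ℝ :=
  Matrix.of fun p q =>
    deriv (fun φ => deriv
      (fun θ => ∑ k, c k * (A * rotB n p.1.1 p.1.2 θ * rotB n q.1.1 q.1.2 φ) k k) 0) 0

def rotGen (n : ℕ) (i j : Fin n) : Matrix (Fin n) (Fin n) ℝ :=
  Matrix.of fun k l => (if k = j ∧ l = i then 1 else 0) - if k = i ∧ l = j then 1 else 0

theorem hasDerivAt_rotB_apply (n : ℕ) (i j k l : Fin n) :
    HasDerivAt (fun θ => rotB n i j θ k l) (rotGen n i j k l) 0 := by
  have hcos : HasDerivAt Real.cos 0 0 := by simpa using Real.hasDerivAt_cos 0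
  have hsin : HasDerivAt Real.sin 1 0 := by simpa using Real.hasDerivAt_sin 0
  by_cases hki : k = i <;> by_cases hli : l = i <;> by_cases hkj : k = j <;>
    by_cases hlj : l = j <;>
    simp_all [rotB, rotGen, hsin.fun_neg, hasDerivAt_const]

theorem deriv_deriv_sum_mul {ι : Type*} [Fintype ι] {g h : ι → ℝ → ℝ} {g' h' : ι → ℝ}
    {x y : ℝ} (hg : ∀ t, HasDerivAt (g t) (g' t) x) (hh : ∀ t, HasDerivAt (h t) (h' t) y) :
    deriv (fun φ => deriv (fun θ => ∑ t, g t θ * h t φ) x) y = ∑ t, g' t * h' t := by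
  have inner (φ : ℝ) : deriv (fun θ => ∑ t, g t θ * h t φ) x = ∑ t, g' t * h t φ :=
    (HasDerivAt.fun_sum fun t _ => (hg t).mul_const (h t φ)).deriv
  simp only [inner]
  exact (HasDerivAt.fun_sum fun t _ => (hh t).const_mul (g' t)).deriv

theorem Matrix.IsDiag.mul_mul_apply_self {ι R : Type*} [Fintype ι] [DecidableEq ι]
    [CommSemiring R] {A : Matrix ι ι R} (hA : A.IsDiag) (B C : Matrix ι ι R) (k : ι) :
    (A * B * C) k k = ∑ m, A k k * B k m * C m k := by
  nth_rw 1 [← hA.diagonal_diag]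
  rw [Matrix.mul_apply]
  simp only [Matrix.diagonal_mul, Matrix.diag_apply]

theorem hessB_apply {n : ℕ} (c : Fin n → ℝ) {A : Matrix (Fin n) (Fin n) ℝ} (hA : A.IsDiag)
    (p q : Pairs n) :
    hessB n c A p q =
      ∑ k, ∑ m, c k * A k k * rotGen n p.1.1 p.1.2 k m * rotGen n q.1.1 q.1.2 m k := by
  have hsplit (θ φ : ℝ) :
      ∑ k, c k * (A * rotB n p.1.1 p.1.2 θ * rotB n q.1.1 q.1.2 φ) k k =
        ∑ km : Fin n × Fin n, c km.1 * A km.1 km.1 * rotB n p.1.1 p.1.2 θ km.1 km.2 *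
          rotB n q.1.1 q.1.2 φ km.2 km.1 := by
    simp only [hA.mul_mul_apply_self, Finset.mul_sum, Fintype.sum_prod_type, mul_assoc]
  simp only [hessB, Matrix.of_apply, hsplit]
  refine (deriv_deriv_sum_mul
    (g := fun (km : Fin n × Fin n) θ => c km.1 * A km.1 km.1 * rotB n p.1.1 p.1.2 θ km.1 km.2)
    (h := fun (km : Fin n × Fin n) φ => rotB n q.1.1 q.1.2 φ km.2 km.1)
    (fun km => (hasDerivAt_rotB_apply n p.1.1 p.1.2 km.1 km.2).const_mul _)
    (fun km => hasDerivAt_rotB_apply n q.1.1 q.1.2 km.2 km.1)).trans ?_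
  exact Fintype.sum_prod_type _

theorem sum_mul_rotGen_mul_rotGen {n : ℕ} (w : Fin n → ℝ) (p q : Pairs n) :
    ∑ k, ∑ m, w k * rotGen n p.1.1 p.1.2 k m * rotGen n q.1.1 q.1.2 m k =
      if p = q then -w p.1.1 - w p.1.2 else 0 := by
  simp only [rotGen, Matrix.of_apply, mul_sub, mul_ite, mul_one, mul_zero, ite_and,
    Finset.sum_sub_distrib, Finset.sum_ite_eq', Finset.mem_univ, if_true]
  by_cases hpq : p = q
  · subst hpq
    simp [p.2.ne, p.2.ne']
  · have hne : ¬(q.1.1 = p.1.1 ∧ q.1.2 = p.1.2) := fun h =>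
      hpq (Subtype.ext (Prod.ext h.1.symm h.2.symm))
    have hswap : ¬(q.1.1 = p.1.2 ∧ q.1.2 = p.1.1) := fun h =>
      lt_asymm p.2 (h.1 ▸ h.2 ▸ q.2)
    rw [if_neg hpq]
    split_ifs <;> simp_all

theorem neg_mul_sub_mul_ne_zero {a b s t : ℝ} (ha : 0 ≤ a) (hab : a < b)
    (hs : s = 1 ∨ s = -1) (ht : t = 1 ∨ t = -1) : -(a * s) - b * t ≠ 0 := by
  rcases hs with rfl | rfl <;> rcases ht with rfl | rfl <;> linarith

theorem hessian_diag_nondegenerate_general (n : ℕ) (c : Fin n → ℝ) (hc : StrictMono c)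
    (hc0 : ∀ i, 0 ≤ c i) (A : Matrix (Fin n) (Fin n) ℝ)
    (hdiag : A.IsDiag)
    (hpm : ∀ i, A i i = 1 ∨ A i i = -1) :
    (∀ p q : Pairs n, hessB n c A p q =
        if p = q then -(c p.1.1 * A p.1.1 p.1.1) - c p.1.2 * A p.1.2 p.1.2 else 0) ∧
      (∀ p : Pairs n, hessB n c A p p ≠ 0) ∧ (hessB n c A).det ≠ 0 := by
  have hentry (p q : Pairs n) : hessB n c A p q =
      if p = q then -(c p.1.1 * A p.1.1 p.1.1) - c p.1.2 * A p.1.2 p.1.2 else 0 :=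
    (hessB_apply c hdiag p q).trans (sum_mul_rotGen_mul_rotGen (fun k => c k * A k k) p q)
  have hpivot (p : Pairs n) : -(c p.1.1 * A p.1.1 p.1.1) - c p.1.2 * A p.1.2 p.1.2 ≠ 0 :=
    neg_mul_sub_mul_ne_zero (hc0 _) (hc p.2) (hpm _) (hpm _)
  have hdiagonal : hessB n c A =
      Matrix.diagonal fun p => -(c p.1.1 * A p.1.1 p.1.1) - c p.1.2 * A p.1.2 p.1.2 :=
    Matrix.ext fun p q => by rw [hentry, Matrix.diagonal_apply]
  refine ⟨hentry, fun p => by simpa only [hentry, if_pos] using hpivot p, ?_⟩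
  rw [hdiagonal, Matrix.det_diagonal]
  exact Finset.prod_ne_zero_iff.mpr fun p _ => hpivot p

/-- For `0 ≤ c 0 < ... < c (n-1)` and a diagonal `A ∈ SO(n)` with diagonal
entries `εᵢ = ±1`, the Hessian of `f_C` at `A` in the rotation coordinates `B_{ij}` is
diagonal with entries `-cᵢεᵢ - cⱼεⱼ` (over pairs `i < j`), all nonzero; hence the Hessian
is invertible, i.e. `A` is a non-degenerate critical point of `f_C`. -/
theorem hessian_diag_nondegenerate (n : ℕ) (c : Fin n → ℝ) (hc : StrictMono c)
    (hc0 : ∀ i, 0 ≤ c i) (A : Matrix (Fin n) (Fin n) ℝ)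
    (hA : A ∈ Matrix.specialOrthogonalGroup (Fin n) ℝ) (hdiag : A.IsDiag)
    (hpm : ∀ i, A i i = 1 ∨ A i i = -1) :
    (∀ p q : Pairs n, hessB n c A p q =
        if p = q then -(c p.1.1 * A p.1.1 p.1.1) - c p.1.2 * A p.1.2 p.1.2 else 0) ∧
      (∀ p : Pairs n, hessB n c A p p ≠ 0) ∧ (hessB n c A).det ≠ 0 :=
  hessian_diag_nondegenerate_general n c hc hc0 A hdiag hpm
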